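/- arXiv:2403.12292 — 2 statements merged into one kernel-verified Lean document; each statement's English description precedes it below -/
import Mathlib

section
/- Let n ≥ 2, p > 1/n, and 0 < r < 1. Let M be a positive definite symmetric n×n real matrix with eigenvalues λ₁ ≤ λ₂ ≤ ⋯ ≤ λ_n, let e be a unit vector, and suppose there are constants c₀, C₀ > 0 such that: c₀ r^{−1/p} ≤ det M ≤ C₀ r^{−1/p}; ‖M‖ ≤ C₀ r^{−1}; eᵀ M e ≤ C₀ r^{n−1−1/p}; and ξᵀ M ξ ≥ c₀ r^{−1} for every unit vector ξ orthogonal to e. Then there is C > 0 depending only on n, p, c₀, C₀ such that C^{−1} r^{n−1−1/p} ≤ λ₁ ≤ C r^{n−1−1/p} and C^{−1} r^{−1} ≤ λ_i ≤ C r^{−1} for i = 2, …, n. -/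
/-!
Order the eigenvalues `λ₁ ≤ ⋯ ≤ λₙ`. The bound `‖M‖ ≤ C₀ r⁻¹` caps every `λᵢ`, and by Rayleigh
`λ₁ ≤ eᵀ M e ≤ C₀ r^{n-1-1/p}`. For `i ≥ 2` the plane spanned by eigenvectors of `λ₁` and `λᵢ`
meets `e⟂` in a unit vector `ξ`, so `c₀ r⁻¹ ≤ ξᵀ M ξ ≤ λᵢ` (min–max). Finally
`c₀ r^{-1/p} ≤ det M = λ₁ ∏_{i ≥ 2} λᵢ ≤ λ₁ (C₀ r⁻¹)^{n-1}` bounds `λ₁` from below.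
-/

open Set Filter Metric Topology
open scoped RealInnerProductSpace

noncomputable section

/-- Operator norm of a matrix acting on Euclidean space. -/
def matNorm {n : ℕ} (M : Matrix (Fin n) (Fin n) ℝ) : ℝ :=
  ‖Matrix.toEuclideanCLM (𝕜 := ℝ) M‖

/-- The quadratic form `ξ ↦ ξᵀ M ξ` of a matrix on Euclidean space. -/
def quadForm {n : ℕ} (M : Matrix (Fin n) (Fin n) ℝ) (ξ : EuclideanSpace ℝ (Fin n)) : ℝ :=
  ∑ i, ∑ j, ξ i * M i j * ξ j

theorem exists_sq_add_sq_eq_one_and_mul_add_mul_eq_zero (a b : ℝ) :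
    ∃ x y : ℝ, x ^ 2 + y ^ 2 = 1 ∧ x * a + y * b = 0 := by
  rcases eq_or_lt_of_le (add_nonneg (sq_nonneg a) (sq_nonneg b)) with h | h
  · exact ⟨1, 0, by norm_num, by nlinarith [sq_nonneg a, sq_nonneg b]⟩
  · have hs := Real.sq_sqrt h.le
    have hs0 : √(a ^ 2 + b ^ 2) ≠ 0 := (Real.sqrt_pos.mpr h).ne'
    refine ⟨b / √(a ^ 2 + b ^ 2), -a / √(a ^ 2 + b ^ 2), ?_, by ring⟩
    rw [div_pow, div_pow, ← add_div, hs]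
    field_simp
    ring

section InnerProductSpace

variable {E : Type*} [NormedAddCommGroup E] [InnerProductSpace ℝ E]

theorem inner_smul_add_smul_eq {u w : E} (hu : ‖u‖ = 1) (hw : ‖w‖ = 1) (huw : ⟪u, w⟫ = 0)
    (x y x' y' : ℝ) : ⟪x • u + y • w, x' • u + y' • w⟫ = x * x' + y * y' := by
  have hwu : ⟪w, u⟫ = 0 := by rwa [real_inner_comm]
  simp only [inner_add_left, inner_add_right, real_inner_smul_left, real_inner_smul_right,
    real_inner_self_eq_norm_sq, hu, hw, huw, hwu]
  ring

theorem exists_unit_orthogonal_inner_apply_le_max {T : E →ₗ[ℝ] E} {u w : E} {a b : ℝ}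
    (hu : ‖u‖ = 1) (hw : ‖w‖ = 1) (huw : ⟪u, w⟫ = 0) (hTu : T u = a • u) (hTw : T w = b • w)
    (e : E) : ∃ ξ : E, ‖ξ‖ = 1 ∧ ⟪ξ, e⟫ = 0 ∧ ⟪ξ, T ξ⟫ ≤ max a b := by
  obtain ⟨x, y, hxy, he⟩ := exists_sq_add_sq_eq_one_and_mul_add_mul_eq_zero ⟪u, e⟫ ⟪w, e⟫
  have hTξ : T (x • u + y • w) = (x * a) • u + (y * b) • w := by
    rw [map_add, map_smul, map_smul, hTu, hTw, smul_smul, smul_smul]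
  refine ⟨x • u + y • w, ?_, ?_, ?_⟩
  · have h := inner_smul_add_smul_eq hu hw huw x y x y
    rw [real_inner_self_eq_norm_sq, ← sq, ← sq, hxy] at h
    exact (pow_eq_one_iff_of_nonneg (norm_nonneg _) two_ne_zero).mp h
  · rw [inner_add_left, real_inner_smul_left, real_inner_smul_left, he]
  · rw [hTξ, inner_smul_add_smul_eq hu hw huw]
    calc x * (x * a) + y * (y * b) ≤ x ^ 2 * max a b + y ^ 2 * max a b := by
          nlinarith [mul_le_mul_of_nonneg_left (le_max_left a b) (sq_nonneg x),
            mul_le_mul_of_nonneg_left (le_max_right a b) (sq_nonneg y)]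
      _ = max a b := by rw [← add_mul, hxy, one_mul]

variable {ι : Type*} [Fintype ι]

theorem LinearMap.IsSymmetric.inner_self_apply_eq_sum {T : E →ₗ[ℝ] E} (hT : T.IsSymmetric)
    (v : OrthonormalBasis ι ℝ E) {μ : ι → ℝ} (hv : ∀ i, T (v i) = μ i • v i) (x : E) :
    ⟪x, T x⟫ = ∑ i, μ i * ⟪v i, x⟫ ^ 2 := by
  rw [← v.sum_inner_mul_inner x (T x)]
  refine Finset.sum_congr rfl fun i _ => ?_
  rw [← hT, hv, real_inner_smul_left, real_inner_comm]
  ring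

theorem LinearMap.IsSymmetric.mul_sq_norm_le_inner_self_apply {T : E →ₗ[ℝ] E}
    (hT : T.IsSymmetric) (v : OrthonormalBasis ι ℝ E) {μ : ι → ℝ} (hv : ∀ i, T (v i) = μ i • v i)
    {a : ℝ} (ha : ∀ i, a ≤ μ i) (x : E) : a * ‖x‖ ^ 2 ≤ ⟪x, T x⟫ := by
  rw [hT.inner_self_apply_eq_sum v hv, ← v.sum_sq_inner_right, Finset.mul_sum]
  exact Finset.sum_le_sum fun i _ => mul_le_mul_of_nonneg_right (ha i) (sq_nonneg _)

end InnerProductSpace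

theorem prod_le_mul_pow_card_sub_one {ι R : Type*} [Fintype ι] [DecidableEq ι] [CommSemiring R]
    [PartialOrder R] [IsOrderedRing R] {f : ι → R} {B : R} (h0 : ∀ i, 0 ≤ f i)
    (hB : ∀ i, f i ≤ B) (j : ι) : ∏ i, f i ≤ f j * B ^ (Fintype.card ι - 1) := by
  rw [← Finset.mul_prod_erase _ f (Finset.mem_univ j), ← Finset.card_univ,
    ← Finset.card_erase_of_mem (Finset.mem_univ j)]
  exact mul_le_mul_of_nonneg_left ((Finset.prod_le_prod (fun i _ => h0 i) fun i _ => hB i).trans_eq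
    (Finset.prod_const B)) (h0 j)

theorem quadForm_eq_inner {n : ℕ} (M : Matrix (Fin n) (Fin n) ℝ) (ξ : EuclideanSpace ℝ (Fin n)) :
    quadForm M ξ = ⟪ξ, Matrix.toEuclideanLin M ξ⟫ := by
  simp only [quadForm, PiLp.inner_apply, RCLike.inner_apply, conj_trivial,
    Matrix.ofLp_toLpLin, Matrix.toLin'_apply, Matrix.mulVec, dotProduct, Finset.sum_mul]
  exact Finset.sum_congr rfl fun i _ => Finset.sum_congr rfl fun j _ => by ring

namespace Matrix.IsHermitian

variable {n : ℕ} {M : Matrix (Fin n) (Fin n) ℝ} (hM : M.IsHermitian)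

theorem toEuclideanLin_eigenvectorBasis (i : Fin n) :
    M.toEuclideanLin (hM.eigenvectorBasis i) = hM.eigenvalues i • hM.eigenvectorBasis i := by
  apply (WithLp.equiv 2 _).injective
  simpa [Matrix.ofLp_toLpLin] using hM.mulVec_eigenvectorBasis i

theorem mul_sq_norm_le_quadForm {a : ℝ} (ha : ∀ i, a ≤ hM.eigenvalues i)
    (ξ : EuclideanSpace ℝ (Fin n)) : a * ‖ξ‖ ^ 2 ≤ quadForm M ξ := by
  rw [quadForm_eq_inner]
  exact (isSymmetric_toEuclideanLin_iff.mpr hM).mul_sq_norm_le_inner_self_apply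
    hM.eigenvectorBasis hM.toEuclideanLin_eigenvectorBasis ha ξ

theorem le_max_eigenvalues_of_forall_orthogonal (e : EuclideanSpace ℝ (Fin n)) {c : ℝ}
    (hc : ∀ ξ : EuclideanSpace ℝ (Fin n), ‖ξ‖ = 1 → ⟪ξ, e⟫ = 0 → c ≤ quadForm M ξ)
    {i j : Fin n} (hij : i ≠ j) : c ≤ max (hM.eigenvalues i) (hM.eigenvalues j) := by
  have hv := hM.eigenvectorBasis.orthonormal
  obtain ⟨ξ, hξ, hξe, hMξ⟩ := exists_unit_orthogonal_inner_apply_le_max (hv.1 i) (hv.1 j)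
    (hv.2 hij) (hM.toEuclideanLin_eigenvectorBasis i) (hM.toEuclideanLin_eigenvectorBasis j) e
  exact (hc ξ hξ hξe).trans (quadForm_eq_inner M ξ ▸ hMξ)

theorem eigenvalues_le_matNorm (i : Fin n) : hM.eigenvalues i ≤ matNorm M := by
  have hv : ‖hM.eigenvectorBasis i‖ = 1 := hM.eigenvectorBasis.orthonormal.1 i
  have hMv : Matrix.toEuclideanCLM (𝕜 := ℝ) M (hM.eigenvectorBasis i)
      = hM.eigenvalues i • hM.eigenvectorBasis i := hM.toEuclideanLin_eigenvectorBasis i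
  calc hM.eigenvalues i ≤ ‖Matrix.toEuclideanCLM (𝕜 := ℝ) M (hM.eigenvectorBasis i)‖ := by
        rw [hMv, norm_smul, hv, mul_one, Real.norm_eq_abs]
        exact le_abs_self _
    _ ≤ matNorm M := by
        simpa [matNorm, hv] using
          (Matrix.toEuclideanCLM (𝕜 := ℝ) M).le_opNorm (hM.eigenvectorBasis i)

theorem det_le_eigenvalues_mul_pow (hMpd : M.PosDef) {B : ℝ} (hB : matNorm M ≤ B)
    (i : Fin n) : M.det ≤ hM.eigenvalues i * B ^ (n - 1) := by
  have h := prod_le_mul_pow_card_sub_one (fun j => (hMpd.eigenvalues_pos j).le)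
    (fun j => (hM.eigenvalues_le_matNorm j).trans hB) i
  rw [Fintype.card_fin] at h
  simpa [hM.det_eq_prod_eigenvalues] using h

end Matrix.IsHermitian

theorem div_pow_mul_rpow_le_of_le_mul_inv_pow {r c C x q : ℝ} {m : ℕ} (hr : 0 < r) (hC : 0 < C)
    (h : c * r ^ (-q) ≤ x * (C * r⁻¹) ^ m) : c / C ^ m * r ^ ((m : ℝ) - q) ≤ x := by
  rw [sub_eq_add_neg, Real.rpow_add hr, Real.rpow_natCast, mul_pow, inv_pow] at *
  rw [div_mul_eq_mul_div, div_le_iff₀ (pow_pos hC m)]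
  calc c * (r ^ m * r ^ (-q)) = r ^ m * (c * r ^ (-q)) := by ring
    _ ≤ r ^ m * (x * (C ^ m * (r ^ m)⁻¹)) := by gcongr
    _ = x * C ^ m := by field_simp

theorem exists_pos_le_and_inv_le {a : ℝ} (ha : 0 < a) (b : ℝ) : ∃ C > 0, b ≤ C ∧ C⁻¹ ≤ a := by
  have hC : 0 < max b a⁻¹ := lt_max_of_lt_right (inv_pos.mpr ha)
  exact ⟨max b a⁻¹, hC, le_max_left _ _, inv_le_of_inv_le₀ ha (le_max_right _ _)⟩

/-- Corollary 3.3 of the paper: eigenvalue asymptotics for the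
Hessian of the dual flow: `λ₁ ≈ r^{n-1-1/p}` and `λ₂ ≈ ⋯ ≈ λ_n ≈ r^{-1}`. -/
theorem stmt8
    (n : ℕ) (hn : 2 ≤ n) (p : ℝ)
    (c₀ C₀ : ℝ) (hc₀ : 0 < c₀) (hC₀ : 0 < C₀) :
    ∃ C > 0, ∀ (r : ℝ), 0 < r → r < 1 →
      ∀ (M : Matrix (Fin n) (Fin n) ℝ) (hM : M.IsHermitian), M.PosDef →
      ∀ (e : EuclideanSpace ℝ (Fin n)), ‖e‖ = 1 →
      ∀ lam : Fin n → ℝ, Monotone lam →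
      (∃ σ : Equiv.Perm (Fin n), ∀ i, lam i = hM.eigenvalues (σ i)) →
      -- c₀ r^{-1/p} ≤ det M ≤ C₀ r^{-1/p}
      c₀ * r ^ (-(1 / p)) ≤ M.det → M.det ≤ C₀ * r ^ (-(1 / p)) →
      -- ‖M‖ ≤ C₀ r^{-1}
      matNorm M ≤ C₀ * r⁻¹ →
      -- eᵀ M e ≤ C₀ r^{n-1-1/p}
      quadForm M e ≤ C₀ * r ^ ((n:ℝ) - 1 - 1 / p) →
      -- ξᵀ M ξ ≥ c₀ r⁻¹ for unit ξ ⟂ e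
      (∀ ξ : EuclideanSpace ℝ (Fin n), ‖ξ‖ = 1 → ⟪ξ, e⟫ = 0 → c₀ * r⁻¹ ≤ quadForm M ξ) →
      -- conclusions
      (C⁻¹ * r ^ ((n:ℝ) - 1 - 1 / p) ≤ lam ⟨0, by omega⟩ ∧
        lam ⟨0, by omega⟩ ≤ C * r ^ ((n:ℝ) - 1 - 1 / p)) ∧
      ∀ i : Fin n, i ≠ ⟨0, by omega⟩ → C⁻¹ * r⁻¹ ≤ lam i ∧ lam i ≤ C * r⁻¹ := by
  obtain ⟨C, hC, hC₀C, hCinv⟩ :=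
    exists_pos_le_and_inv_le (a := min c₀ (c₀ / C₀ ^ (n - 1))) (by positivity) C₀
  refine ⟨C, hC, fun r hr _ M hM hMpd e he lam hmono ⟨σ, hσ⟩ hdet _ hnorm hqe hperp => ?_⟩
  set i₀ : Fin n := ⟨0, by omega⟩
  have hr' : 0 ≤ r⁻¹ := inv_nonneg.mpr hr.le
  have hs : 0 ≤ r ^ ((n : ℝ) - 1 - 1 / p) := by positivity
  have hi₀ : ∀ i, i₀ ≤ i := fun i => Fin.le_def.mpr (Nat.zero_le _)
  have hmin : ∀ m, lam i₀ ≤ hM.eigenvalues m := fun m => by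
    simpa [hσ] using hmono (hi₀ (σ.symm m))
  have h0_upper : lam i₀ ≤ C₀ * r ^ ((n : ℝ) - 1 - 1 / p) := by
    simpa [he] using (hM.mul_sq_norm_le_quadForm hmin e).trans hqe
  have h0_lower : c₀ / C₀ ^ (n - 1) * r ^ ((n : ℝ) - 1 - 1 / p) ≤ lam i₀ := by
    have h := hdet.trans (hM.det_le_eigenvalues_mul_pow hMpd hnorm (σ i₀))
    rw [← hσ] at h
    simpa [Nat.cast_sub (by omega : 1 ≤ n), sub_sub] using
      div_pow_mul_rpow_le_of_le_mul_inv_pow hr hC₀ h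
  have hi_lower : ∀ i ≠ i₀, c₀ * r⁻¹ ≤ lam i := fun i hi => by
    have h := hM.le_max_eigenvalues_of_forall_orthogonal e hperp (σ.injective.ne hi.symm)
    rwa [← hσ, ← hσ, max_eq_right (hmono (hi₀ i))] at h
  refine ⟨⟨?_, h0_upper.trans (by gcongr)⟩, fun i hi => ⟨?_, ?_⟩⟩
  · exact (mul_le_mul_of_nonneg_right (hCinv.trans (min_le_right _ _)) hs).trans h0_lower
  · exact (mul_le_mul_of_nonneg_right (hCinv.trans (min_le_left _ _)) hr').trans (hi_lower i hi)
  · exact (hσ i ▸ (hM.eigenvalues_le_matNorm _).trans hnorm).trans (by gcongr)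
end
end

section
/- Let n ≥ 2, p > 1/n, T > 0. Let u : B₁(0) × [0,T] → ℝ be parabolically convex with u(0,t) = 0, twice differentiable in x away from the origin, and suppose there is C₀ > 0 such that the radial second derivative satisfies C₀^{−1}|x|^{n−1−1/p} ≤ u_{rr}(x,t) ≤ C₀|x|^{n−1−1/p} for all 0 < |x| < 1 and t ∈ [0,T]. Let φ(x,t) = lim_{λ→0⁺} u(λx,t)/λ be the tangent cone of u(·,t) at the origin and set w = u − φ. Then there is C > 0 depending only on n, p, C₀ such that C^{−1}|x|^{n+1−1/p} ≤ w(x,t) ≤ C|x|^{n+1−1/p} for all 0 < |x| < 1 and t ∈ [0,T]. -/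
/-!
Along the ray through `x`, `g l = u (l • x) t` has `g'' l = ‖x‖² u_rr (l • x, t)`, which is
comparable to `‖x‖^β l^(β-2)` with `β = n + 1 - 1/p > 1`, i.e. to the second derivative of
`k l^β` with `k ≍ ‖x‖^β / (β (β - 1))`. Hence `k l^β - g` (resp. `g - k l^β`) is convex on
`(0, ‖x‖⁻¹)`. A convex function `H` there with `H l / l → a` as `l → 0⁺` satisfies `a ≤ H l / l`,
since `H l / l` is the limit of secant slopes from points tending to `0`. As `g l / l → φ x t`,
evaluating at `l = 1` bounds `w x t = g 1 - φ x t` by `k‖x‖^β` from both sides.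
-/

open Set Filter Metric Topology
open scoped RealInnerProductSpace

noncomputable section

/-- The spatial Hessian matrix of `f` at `x`. -/
def hess {n : ℕ} (f : EuclideanSpace ℝ (Fin n) → ℝ) (x : EuclideanSpace ℝ (Fin n)) :
    Matrix (Fin n) (Fin n) ℝ :=
  Matrix.of fun i j =>
    fderiv ℝ (fun y => fderiv ℝ f y (EuclideanSpace.single j 1)) x (EuclideanSpace.single i 1)

/-- The radial second derivative `u_{rr}(x,t) = Σ_{ij} x_i x_j u_{ij}(x,t) / |x|²`. -/
def urr {n : ℕ} (u : EuclideanSpace ℝ (Fin n) → ℝ → ℝ)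
    (x : EuclideanSpace ℝ (Fin n)) (t : ℝ) : ℝ :=
  (∑ i, ∑ j, x i * x j * hess (fun y => u y t) x i j) / ‖x‖ ^ 2

lemma div_le_div_of_convexOn_Ioo {H : ℝ → ℝ} {b l₁ l₂ : ℝ} (hH : ConvexOn ℝ (Ioo 0 b) H)
    (h0 : Tendsto H (𝓝[>] 0) (𝓝 0)) (hl₁ : 0 < l₁) (h12 : l₁ ≤ l₂) (hl₂ : l₂ < b) :
    H l₁ / l₁ ≤ H l₂ / l₂ := by
  have secant (l : ℝ) (hl : 0 < l) :
      Tendsto (fun ε => (H l - H ε) / (l - ε)) (𝓝[>] 0) (𝓝 (H l / l)) := by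
    have hden : Tendsto (fun ε => l - ε) (𝓝[>] 0) (𝓝 (l - 0)) :=
      tendsto_const_nhds.sub (tendsto_nhdsWithin_of_tendsto_nhds tendsto_id)
    simpa only [sub_zero, Pi.div_def] using
      (tendsto_const_nhds.sub h0).div hden (by simpa using hl.ne')
  refine le_of_tendsto_of_tendsto (secant l₁ hl₁) (secant l₂ (hl₁.trans_le h12)) ?_
  filter_upwards [Ioo_mem_nhdsGT hl₁] with ε hε
  have hl₁b : l₁ < b := h12.trans_lt hl₂
  exact hH.secant_mono ⟨hε.1, hε.2.trans hl₁b⟩ ⟨hl₁, hl₁b⟩ ⟨hl₁.trans_le h12, hl₂⟩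
    hε.2.ne' (hε.2.trans_le h12).ne' h12

lemma le_div_of_convexOn_Ioo {H : ℝ → ℝ} {a b l : ℝ} (hH : ConvexOn ℝ (Ioo 0 b) H)
    (ha : Tendsto (fun l => H l / l) (𝓝[>] 0) (𝓝 a)) (hl : l ∈ Ioo 0 b) : a ≤ H l / l := by
  have h0 : Tendsto H (𝓝[>] 0) (𝓝 0) := by
    have := ha.mul (tendsto_nhdsWithin_of_tendsto_nhds (tendsto_id (x := 𝓝 (0:ℝ))))
    rw [mul_zero] at this
    refine this.congr' ?_
    filter_upwards [self_mem_nhdsWithin] with ε hε using div_mul_cancel₀ _ (ne_of_gt hε)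
  refine le_of_tendsto ha ?_
  filter_upwards [Ioo_mem_nhdsGT hl.1] with ε hε
  exact div_le_div_of_convexOn_Ioo hH h0 hε.1 hε.2.le hl.2

theorem sub_mul_le_sub_mul_of_deriv2_le {f f' f'' g g' g'' : ℝ → ℝ} {a c b l : ℝ}
    (hf : ∀ l ∈ Ioo 0 b, HasDerivAt f (f' l) l) (hf' : ∀ l ∈ Ioo 0 b, HasDerivAt f' (f'' l) l)
    (hg : ∀ l ∈ Ioo 0 b, HasDerivAt g (g' l) l) (hg' : ∀ l ∈ Ioo 0 b, HasDerivAt g' (g'' l) l)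
    (hle : ∀ l ∈ Ioo 0 b, f'' l ≤ g'' l)
    (hfa : Tendsto (fun l => f l / l) (𝓝[>] 0) (𝓝 a))
    (hgc : Tendsto (fun l => g l / l) (𝓝[>] 0) (𝓝 c)) (hl : l ∈ Ioo 0 b) :
    f l - a * l ≤ g l - c * l := by
  have hconv : ConvexOn ℝ (Ioo 0 b) (g - f) := by
    refine convexOn_of_hasDerivWithinAt2_nonneg (convex_Ioo 0 b) (f' := g' - f')
      (f'' := g'' - f'') ?_ ?_ ?_ ?_
    · exact fun l hl => ((hg l hl).sub (hf l hl)).continuousAt.continuousWithinAt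
    all_goals simp only [interior_Ioo]
    · exact fun l hl => ((hg l hl).sub (hf l hl)).hasDerivWithinAt
    · exact fun l hl => ((hg' l hl).sub (hf' l hl)).hasDerivWithinAt
    · exact fun l hl => sub_nonneg.2 (hle l hl)
  have := le_div_of_convexOn_Ioo hconv (by simpa [sub_div] using hgc.sub hfa) hl
  rw [le_div_iff₀ hl.1, Pi.sub_apply] at this
  linarith

lemma tendsto_rpow_div_nhdsGT_zero {β : ℝ} (hβ : 1 < β) :
    Tendsto (fun l : ℝ => l ^ β / l) (𝓝[>] 0) (𝓝 0) := by
  have h := (Real.continuousAt_rpow_const 0 (β - 1) (Or.inr (by linarith))).tendsto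
  rw [Real.zero_rpow (by linarith)] at h
  refine (tendsto_nhdsWithin_of_tendsto_nhds h).congr' ?_
  filter_upwards [self_mem_nhdsWithin] with l hl
  rw [Real.rpow_sub_one (ne_of_gt hl)]

theorem rpow_bounds_of_deriv2_bounds {g g' g'' : ℝ → ℝ} {a A B β b l : ℝ} (hβ : 1 < β)
    (hg : ∀ l ∈ Ioo 0 b, HasDerivAt g (g' l) l) (hg' : ∀ l ∈ Ioo 0 b, HasDerivAt g' (g'' l) l)
    (hbound : ∀ l ∈ Ioo 0 b, A * l ^ (β - 2) ≤ g'' l ∧ g'' l ≤ B * l ^ (β - 2))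
    (hga : Tendsto (fun l => g l / l) (𝓝[>] 0) (𝓝 a)) (hl : l ∈ Ioo 0 b) :
    A / (β * (β - 1)) * l ^ β ≤ g l - a * l ∧ g l - a * l ≤ B / (β * (β - 1)) * l ^ β := by
  have hcancel (k : ℝ) : k / (β * (β - 1)) * β * (β - 1) = k := by
    have : β - 1 ≠ 0 := by linarith
    field_simp
  have power (k : ℝ) : (∀ l ∈ Ioo 0 b, HasDerivAt (fun l => k * l ^ β) (k * β * l ^ (β - 1)) l) ∧
      (∀ l ∈ Ioo 0 b, HasDerivAt (fun l => k * β * l ^ (β - 1)) (k * β * (β - 1) * l ^ (β - 2)) l) ∧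
      Tendsto (fun l => k * l ^ β / l) (𝓝[>] 0) (𝓝 0) := by
    refine ⟨fun l hl => ?_, fun l hl => ?_, ?_⟩
    · simpa [mul_assoc] using (Real.hasDerivAt_rpow_const (p := β) (Or.inl hl.1.ne')).const_mul k
    · have := (Real.hasDerivAt_rpow_const (p := β - 1) (Or.inl hl.1.ne')).const_mul (k * β)
      rw [show β - 1 - 1 = β - 2 by ring] at this
      simpa [mul_assoc] using this
    · simpa [mul_div_assoc] using (tendsto_rpow_div_nhdsGT_zero hβ).const_mul k
  have hA := power (A / (β * (β - 1)))
  have hB := power (B / (β * (β - 1)))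
  constructor
  · have := sub_mul_le_sub_mul_of_deriv2_le hA.1 hA.2.1 hg hg' (fun l hl => ?_) hA.2.2 hga hl
    · simpa using this
    · rw [hcancel]; exact (hbound l hl).1
  · have := sub_mul_le_sub_mul_of_deriv2_le hg hg' hB.1 hB.2.1 (fun l hl => ?_) hga hB.2.2 hl
    · simpa using this
    · rw [hcancel]; exact (hbound l hl).2

lemma fderiv_fderiv_apply_eq_sum_hess {n : ℕ} {f : EuclideanSpace ℝ (Fin n) → ℝ}
    {y : EuclideanSpace ℝ (Fin n)} (hf : DifferentiableAt ℝ (fderiv ℝ f) y)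
    (v : EuclideanSpace ℝ (Fin n)) :
    fderiv ℝ (fderiv ℝ f) y v v = ∑ i, ∑ j, v i * v j * hess f y i j := by
  have hv : v = ∑ i, v i • EuclideanSpace.single i (1 : ℝ) := by
    simpa using ((EuclideanSpace.basisFun (Fin n) ℝ).sum_repr v).symm
  have hentry (i j : Fin n) : hess f y i j =
      fderiv ℝ (fderiv ℝ f) y (EuclideanSpace.single i 1) (EuclideanSpace.single j 1) := by
    simp [hess, fderiv_clm_apply hf (differentiableAt_const _)]
  conv_lhs => rw [hv]
  simp only [map_sum, map_smul, sum_apply, smul_apply, smul_eq_mul, hentry, Finset.mul_sum]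
  rw [Finset.sum_comm]
  exact Finset.sum_congr rfl fun i _ => Finset.sum_congr rfl fun j _ => by ring

lemma urr_eq_fderiv_fderiv {n : ℕ} {u : EuclideanSpace ℝ (Fin n) → ℝ → ℝ}
    {x : EuclideanSpace ℝ (Fin n)} {t : ℝ}
    (hu : DifferentiableAt ℝ (fderiv ℝ (fun y => u y t)) x) :
    urr u x t = fderiv ℝ (fderiv ℝ (fun y => u y t)) x x x / ‖x‖ ^ 2 := by
  rw [urr, fderiv_fderiv_apply_eq_sum_hess hu]

section Ray

variable {E : Type*} [NormedAddCommGroup E] [NormedSpace ℝ E] {f : E → ℝ} {x : E} {l : ℝ}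

lemma hasDerivAt_comp_smul (hf : DifferentiableAt ℝ f (l • x)) :
    HasDerivAt (fun s : ℝ => f (s • x)) (fderiv ℝ f (l • x) x) l :=
  hf.hasFDerivAt.comp_hasDerivAt l (by simpa using (hasDerivAt_id l).smul_const x)

lemma hasDerivAt_fderiv_comp_smul (hf : DifferentiableAt ℝ (fderiv ℝ f) (l • x)) :
    HasDerivAt (fun s : ℝ => fderiv ℝ f (s • x) x) (fderiv ℝ (fderiv ℝ f) (l • x) x x) l := by
  have hcurve : HasDerivAt (fun s : ℝ => fderiv ℝ f (s • x)) (fderiv ℝ (fderiv ℝ f) (l • x) x) l :=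
    hf.hasFDerivAt.comp_hasDerivAt l (by simpa using (hasDerivAt_id l).smul_const x)
  simpa using hcurve.clm_apply (hasDerivAt_const l x)

theorem sub_limit_bounds_of_fderiv_fderiv_self_bounds {A B β φ₀ : ℝ} (hβ : 1 < β)
    (hx0 : 0 < ‖x‖) (hx1 : ‖x‖ < 1)
    (hdiff : ∀ y : E, 0 < ‖y‖ → ‖y‖ < 1 →
      DifferentiableAt ℝ f y ∧ DifferentiableAt ℝ (fderiv ℝ f) y)
    (hbound : ∀ y : E, 0 < ‖y‖ → ‖y‖ < 1 →
      A * ‖y‖ ^ β ≤ fderiv ℝ (fderiv ℝ f) y y y ∧ fderiv ℝ (fderiv ℝ f) y y y ≤ B * ‖y‖ ^ β)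
    (htan : Tendsto (fun l => f (l • x) / l) (𝓝[>] 0) (𝓝 φ₀)) :
    A * ‖x‖ ^ β / (β * (β - 1)) ≤ f x - φ₀ ∧ f x - φ₀ ≤ B * ‖x‖ ^ β / (β * (β - 1)) := by
  have hray (l : ℝ) (hl : l ∈ Ioo 0 ‖x‖⁻¹) : 0 < ‖l • x‖ ∧ ‖l • x‖ < 1 := by
    rw [norm_smul, Real.norm_of_nonneg hl.1.le]
    exact ⟨mul_pos hl.1 hx0, (lt_inv_mul_iff₀' hx0).1 (by simpa using hl.2)⟩
  have hscale (l : ℝ) (hl : l ∈ Ioo 0 ‖x‖⁻¹) (K : ℝ) :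
      K * ‖l • x‖ ^ β / l ^ 2 = K * ‖x‖ ^ β * l ^ (β - 2) := by
    rw [norm_smul, Real.norm_of_nonneg hl.1.le, Real.mul_rpow hl.1.le (norm_nonneg x),
      Real.rpow_sub hl.1, Real.rpow_two]
    ring
  have hsecond (l : ℝ) (hl : l ∈ Ioo 0 ‖x‖⁻¹) :
      fderiv ℝ (fderiv ℝ f) (l • x) x x =
        fderiv ℝ (fderiv ℝ f) (l • x) (l • x) (l • x) / l ^ 2 := by
    simp only [map_smul, smul_apply, smul_eq_mul]
    field_simp [hl.1.ne']
  have key := rpow_bounds_of_deriv2_bounds (l := 1) (A := A * ‖x‖ ^ β) (B := B * ‖x‖ ^ β) hβ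
    (fun l hl => hasDerivAt_comp_smul (hdiff _ (hray l hl).1 (hray l hl).2).1)
    (fun l hl => hasDerivAt_fderiv_comp_smul (hdiff _ (hray l hl).1 (hray l hl).2).2)
    (fun l hl => ?_) htan ⟨one_pos, one_lt_inv_iff₀.2 ⟨hx0, hx1⟩⟩
  · simpa [div_mul_eq_mul_div] using key
  · obtain ⟨hlo, hhi⟩ := hbound _ (hray l hl).1 (hray l hl).2
    have hl2 : 0 < l ^ 2 := by positivity [hl.1]
    rw [hsecond l hl, ← hscale l hl, ← hscale l hl]
    exact ⟨div_le_div_of_nonneg_right hlo hl2.le, div_le_div_of_nonneg_right hhi hl2.le⟩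

end Ray

lemma fderiv_fderiv_self_bounds_of_urr_bounds {n : ℕ} {u : EuclideanSpace ℝ (Fin n) → ℝ → ℝ}
    {x : EuclideanSpace ℝ (Fin n)} {t A B γ : ℝ}
    (hu : DifferentiableAt ℝ (fderiv ℝ (fun y => u y t)) x) (hx : 0 < ‖x‖)
    (h : A * ‖x‖ ^ γ ≤ urr u x t ∧ urr u x t ≤ B * ‖x‖ ^ γ) :
    A * ‖x‖ ^ (γ + 2) ≤ fderiv ℝ (fderiv ℝ (fun y => u y t)) x x x ∧
      fderiv ℝ (fderiv ℝ (fun y => u y t)) x x x ≤ B * ‖x‖ ^ (γ + 2) := by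
  rw [urr_eq_fderiv_fderiv hu, le_div_iff₀ (by positivity), div_le_iff₀ (by positivity)] at h
  rwa [Real.rpow_add hx, Real.rpow_two, ← mul_assoc, ← mul_assoc]

theorem stmt9_general
    (n : ℕ) (p : ℝ) (hp : 1 / n < p) (C₀ : ℝ) (hC₀ : 0 < C₀) :
    ∃ C > 0, ∀ (T : ℝ), 0 < T →
      ∀ u φ : EuclideanSpace ℝ (Fin n) → ℝ → ℝ,
      -- u is parabolically convex on B₁(0) × [0,T] with u(0,t) = 0
      (∀ t ∈ Icc (0:ℝ) T, ConvexOn ℝ (ball (0:EuclideanSpace ℝ (Fin n)) 1)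
        (fun x => u x t)) →
      (∀ x ∈ ball (0:EuclideanSpace ℝ (Fin n)) 1,
        ∀ t₁ ∈ Icc (0:ℝ) T, ∀ t₂ ∈ Icc (0:ℝ) T, t₁ ≤ t₂ → u x t₂ ≤ u x t₁) →
      (∀ t ∈ Icc (0:ℝ) T, u 0 t = 0) →
      -- u(·,t) is twice differentiable away from the origin
      (∀ x : EuclideanSpace ℝ (Fin n), 0 < ‖x‖ → ‖x‖ < 1 → ∀ t ∈ Icc (0:ℝ) T,
        DifferentiableAt ℝ (fun y => u y t) x ∧
        DifferentiableAt ℝ (fderiv ℝ (fun y => u y t)) x) →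
      -- the two-sided radial Hessian bound
      (∀ x : EuclideanSpace ℝ (Fin n), 0 < ‖x‖ → ‖x‖ < 1 → ∀ t ∈ Icc (0:ℝ) T,
        C₀⁻¹ * ‖x‖ ^ ((n:ℝ) - 1 - 1 / p) ≤ urr u x t ∧
        urr u x t ≤ C₀ * ‖x‖ ^ ((n:ℝ) - 1 - 1 / p)) →
      -- φ(·,t) is the tangent cone of u(·,t) at the origin
      (∀ x ∈ ball (0:EuclideanSpace ℝ (Fin n)) 1, ∀ t ∈ Icc (0:ℝ) T,
        Tendsto (fun l : ℝ => u (l • x) t / l) (𝓝[>] 0) (𝓝 (φ x t))) →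
      -- conclusion: w = u - φ ≈ |x|^{n+1-1/p}
      ∀ x : EuclideanSpace ℝ (Fin n), 0 < ‖x‖ → ‖x‖ < 1 → ∀ t ∈ Icc (0:ℝ) T,
        C⁻¹ * ‖x‖ ^ ((n:ℝ) + 1 - 1 / p) ≤ u x t - φ x t ∧
        u x t - φ x t ≤ C * ‖x‖ ^ ((n:ℝ) + 1 - 1 / p) := by
  rcases n.eq_zero_or_pos with rfl | hn
  · exact ⟨1, one_pos, fun _ _ _ _ _ _ _ _ _ _ x hx => by simp [Subsingleton.elim x 0] at hx⟩
  set β := (n:ℝ) + 1 - 1 / p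
  have hβ : 1 < β := by
    have hn' : (0:ℝ) < n := Nat.cast_pos.2 hn
    have := (one_div_lt hn' (lt_trans (by positivity) hp)).1 hp
    linarith
  set K := β * (β - 1)
  have hK : 0 < K := mul_pos (by linarith) (by linarith)
  refine ⟨C₀ * K + C₀ / K, by positivity, ?_⟩
  intro T _ u φ _ _ _ hdiff hurr htan x hx0 hx1 t ht
  have hsecond (y : EuclideanSpace ℝ (Fin n)) (hy0 : 0 < ‖y‖) (hy1 : ‖y‖ < 1) :=
    fderiv_fderiv_self_bounds_of_urr_bounds (hdiff y hy0 hy1 t ht).2 hy0 (hurr y hy0 hy1 t ht)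
  simp only [show (n:ℝ) - 1 - 1 / p + 2 = β by ring] at hsecond
  obtain ⟨hlo, hhi⟩ := sub_limit_bounds_of_fderiv_fderiv_self_bounds hβ hx0 hx1
    (fun y hy0 hy1 => hdiff y hy0 hy1 t ht) hsecond (htan x (mem_ball_zero_iff.2 hx1) t ht)
  constructor
  · calc (C₀ * K + C₀ / K)⁻¹ * ‖x‖ ^ β ≤ (C₀ * K)⁻¹ * ‖x‖ ^ β := by
          gcongr; exact le_add_of_nonneg_right (by positivity)
      _ = C₀⁻¹ * ‖x‖ ^ β / K := by field_simp
      _ ≤ u x t - φ x t := hlo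
  · calc u x t - φ x t ≤ C₀ * ‖x‖ ^ β / K := hhi
      _ = C₀ / K * ‖x‖ ^ β := by ring
      _ ≤ (C₀ * K + C₀ / K) * ‖x‖ ^ β := by gcongr; exact le_add_of_nonneg_left (by positivity)

/-- estimate (3.18) of the paper: the two-sided growth estimate
`w = u - φ ≈ |x|^{n+1-1/p}` follows from `u_{rr} ≈ |x|^{n-1-1/p}`. -/
theorem stmt9
    (n : ℕ) (hn : 2 ≤ n) (p : ℝ) (hp : 1 / n < p) (C₀ : ℝ) (hC₀ : 0 < C₀) :
    ∃ C > 0, ∀ (T : ℝ), 0 < T →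
      ∀ u φ : EuclideanSpace ℝ (Fin n) → ℝ → ℝ,
      -- u is parabolically convex on B₁(0) × [0,T] with u(0,t) = 0
      (∀ t ∈ Icc (0:ℝ) T, ConvexOn ℝ (ball (0:EuclideanSpace ℝ (Fin n)) 1)
        (fun x => u x t)) →
      (∀ x ∈ ball (0:EuclideanSpace ℝ (Fin n)) 1,
        ∀ t₁ ∈ Icc (0:ℝ) T, ∀ t₂ ∈ Icc (0:ℝ) T, t₁ ≤ t₂ → u x t₂ ≤ u x t₁) →
      (∀ t ∈ Icc (0:ℝ) T, u 0 t = 0) →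
      -- u(·,t) is twice differentiable away from the origin
      (∀ x : EuclideanSpace ℝ (Fin n), 0 < ‖x‖ → ‖x‖ < 1 → ∀ t ∈ Icc (0:ℝ) T,
        DifferentiableAt ℝ (fun y => u y t) x ∧
        DifferentiableAt ℝ (fderiv ℝ (fun y => u y t)) x) →
      -- the two-sided radial Hessian bound
      (∀ x : EuclideanSpace ℝ (Fin n), 0 < ‖x‖ → ‖x‖ < 1 → ∀ t ∈ Icc (0:ℝ) T,
        C₀⁻¹ * ‖x‖ ^ ((n:ℝ) - 1 - 1 / p) ≤ urr u x t ∧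
        urr u x t ≤ C₀ * ‖x‖ ^ ((n:ℝ) - 1 - 1 / p)) →
      -- φ(·,t) is the tangent cone of u(·,t) at the origin
      (∀ x ∈ ball (0:EuclideanSpace ℝ (Fin n)) 1, ∀ t ∈ Icc (0:ℝ) T,
        Tendsto (fun l : ℝ => u (l • x) t / l) (𝓝[>] 0) (𝓝 (φ x t))) →
      -- conclusion: w = u - φ ≈ |x|^{n+1-1/p}
      ∀ x : EuclideanSpace ℝ (Fin n), 0 < ‖x‖ → ‖x‖ < 1 → ∀ t ∈ Icc (0:ℝ) T,
        C⁻¹ * ‖x‖ ^ ((n:ℝ) + 1 - 1 / p) ≤ u x t - φ x t ∧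
        u x t - φ x t ≤ C * ‖x‖ ^ ((n:ℝ) + 1 - 1 / p) :=
  stmt9_general n p hp C₀ hC₀
end
end
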